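/- Let m ≥ 1, X a real d×m matrix with columns x₁,…,x_m, y ∈ {−1,+1}^m, Y = diag(y), e ∈ ℝ^m the all-ones vector, C₁ > 0, C₂ > 0, D ∈ ℝ. Set Q = Y XᵀX Y, let H be the 2m×2m block matrix [[Q + (m/(2C₁)) I, −Q], [−Q, Q + (m/(2C₂)) I]], q = [(D−1)e; (D+1)e] ∈ ℝ^{2m}, and f(α) = (1/2) αᵀHα + qᵀα. Let α* be a minimizer of f over {α ∈ ℝ^{2m} : α ≥ 0}, and for each index i ∈ {1,…,2m} let α^i be a minimizer of f over {α ≥ 0 : α_i = 0}; write α^i = [ζ^i; β^i] with ζ^i, β^i ∈ ℝ^m and set w^i = X Y (ζ^i − β^i). Then: (a) for each i ∈ {1,…,m}, if α*_i > 0 and y_i x_iᵀ w^i < 0, then 1 ≤ α*_i (‖x_i‖² + m/(2C₁)) + D; (b) for each i ∈ {1,…,m}, if α*_{m+i} > 0 and y_i x_iᵀ w^{m+i} < 0, then 1 ≤ α*_{m+i} (‖x_i‖² + m/(2C₂)) − D. -/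

import Mathlib

/-!
Write `g(α) = Hα + q` for the gradient of `f`. At the minimiser `α*` over the nonnegative
orthant the variational inequality `g(α*) ⬝ (β - α*) ≥ 0` holds for every `β ≥ 0`, and
`g(α*)ₖ = 0` whenever `α*ₖ > 0`. The point `α*` with its `k`-th coordinate set to zero is feasible
for the leave-one-out problem, so comparing it with `αᵏ` gives `δᵀHδ ≤ (α*ₖ)² Hₖₖ` for
`δ = αᵏ - α*`; Cauchy–Schwarz for the positive semidefinite `H` then yields
`|g(αᵏ)ₖ| = |(Hδ)ₖ| ≤ α*ₖ Hₖₖ`. Since `αᵏₖ = 0` kills the regularisation term, `g(αᵏ)ₖ` is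
`yᵢ xᵢᵀwᵏ + D - 1` for `k = i` and `-yᵢ xᵢᵀwᵏ + D + 1` for `k = m + i`, while
`Hₖₖ = ‖xᵢ‖² + m/(2C)`; the lower, respectively upper, half of the bound gives (a) and (b).
-/

open Matrix

lemma Function.update_eq_add_single_sub {ι M : Type*} [DecidableEq ι] [AddCommGroup M]
    (a : ι → M) (k : ι) (x : M) : Function.update a k x = a + Pi.single k (x - a k) := by
  ext j
  rcases eq_or_ne j k with rfl | hj <;> simp [*, add_sub_cancel]

namespace Matrix

section Quadratic

variable {ι : Type*} [Fintype ι] {H : Matrix ι ι ℝ}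

lemma IsSymm.dotProduct_mulVec_comm (hH : H.IsSymm) (u v : ι → ℝ) :
    u ⬝ᵥ (H *ᵥ v) = v ⬝ᵥ (H *ᵥ u) := by
  rw [dotProduct_mulVec, ← vecMul_transpose, hH.eq, dotProduct_comm]

lemma PosSemidef.dotProduct_mulVec_sq_le (hH : H.PosSemidef) (u v : ι → ℝ) :
    (u ⬝ᵥ (H *ᵥ v)) ^ 2 ≤ (u ⬝ᵥ (H *ᵥ u)) * (v ⬝ᵥ (H *ᵥ v)) := by
  have hsymm : H.IsSymm := isHermitian_iff_isSymm.mp hH.isHermitian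
  have hquad : ∀ t : ℝ,
      0 ≤ (u ⬝ᵥ (H *ᵥ u)) * (t * t) + 2 * (u ⬝ᵥ (H *ᵥ v)) * t + v ⬝ᵥ (H *ᵥ v) := by
    intro t
    have h := hH.dotProduct_mulVec_nonneg (t • u + v)
    simp only [star_trivial, mulVec_add, mulVec_smul, dotProduct_add, add_dotProduct,
      dotProduct_smul, smul_dotProduct, smul_eq_mul, hsymm.dotProduct_mulVec_comm v u] at h
    linarith
  have := discrim_le_zero hquad
  rw [discrim] at this
  linarith

end Quadratic

section Blocks

variable {n : Type*} [Fintype n] [DecidableEq n]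

lemma PosSemidef.fromBlocks_add_smul_one_neg {Q : Matrix n n ℝ} (hQ : Q.PosSemidef) {a b : ℝ}
    (ha : 0 ≤ a) (hb : 0 ≤ b) :
    (fromBlocks (Q + a • 1) (-Q) (-Q) (Q + b • 1)).PosSemidef := by
  have hsplit : fromBlocks (Q + a • 1) (-Q) (-Q) (Q + b • 1) =
      fromRows (1 : Matrix n n ℝ) (-1) * Q * (fromRows (1 : Matrix n n ℝ) (-1))ᵀ +
        diagonal (Sum.elim (fun _ => a) fun _ => b) := by
    rw [transpose_fromRows, fromRows_mul, fromRows_mul_fromCols,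
      ← fromBlocks_diagonal, fromBlocks_add]
    simp only [smul_one_eq_diagonal, one_mul, transpose_one, mul_one, transpose_neg, mul_neg,
      add_zero, neg_mul, neg_neg]
  rw [hsplit]
  exact (hQ.mul_mul_conjTranspose_same _).add
    (posSemidef_diagonal_iff.2 (Sum.forall.2 ⟨fun _ => ha, fun _ => hb⟩))

lemma fromBlocks_add_smul_one_neg_mulVec_inl (Q : Matrix n n ℝ) (a b : ℝ) {α : n ⊕ n → ℝ} {i : n}
    (hi : α (Sum.inl i) = 0) :
    (fromBlocks (Q + a • 1) (-Q) (-Q) (Q + b • 1) *ᵥ α) (Sum.inl i) =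
      (Q *ᵥ ((fun j => α (Sum.inl j)) - fun j => α (Sum.inr j))) i := by
  rw [← Sum.elim_comp_inl_inr α, fromBlocks_mulVec]
  simp only [Function.comp_def, Sum.elim_inl, Sum.elim_inr, add_mulVec, smul_mulVec, one_mulVec,
    neg_mulVec, Pi.add_apply, Pi.neg_apply, Pi.smul_apply, hi, smul_eq_mul, mul_zero, mulVec_sub,
    Pi.sub_apply]
  ring

lemma fromBlocks_add_smul_one_neg_mulVec_inr (Q : Matrix n n ℝ) (a b : ℝ) {α : n ⊕ n → ℝ} {i : n}
    (hi : α (Sum.inr i) = 0) :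
    (fromBlocks (Q + a • 1) (-Q) (-Q) (Q + b • 1) *ᵥ α) (Sum.inr i) =
      -(Q *ᵥ ((fun j => α (Sum.inl j)) - fun j => α (Sum.inr j))) i := by
  rw [← Sum.elim_comp_inl_inr α, fromBlocks_mulVec]
  simp only [Function.comp_def, Sum.elim_inl, Sum.elim_inr, add_mulVec, smul_mulVec, one_mulVec,
    neg_mulVec, Pi.add_apply, Pi.neg_apply, Pi.smul_apply, hi, smul_eq_mul, mul_zero, mulVec_sub,
    Pi.sub_apply]
  ring

end Blocks

section Gram

variable {d n : Type*} [Fintype d] [Fintype n] [DecidableEq n] (X : Matrix d n ℝ) (y : n → ℝ)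

lemma posSemidef_diagonal_mul_transpose_mul_self_mul_diagonal :
    (diagonal y * (Xᵀ * X) * diagonal y).PosSemidef := by
  simpa using (posSemidef_conjTranspose_mul_self X).conjTranspose_mul_mul_same (diagonal y)

lemma diagonal_mul_transpose_mul_self_mul_diagonal_apply_self (i : n) :
    (diagonal y * (Xᵀ * X) * diagonal y) i i =
      y i ^ 2 * ((fun j => X j i) ⬝ᵥ fun j => X j i) := by
  rw [mul_diagonal, diagonal_mul, mul_apply]
  simp only [transpose_apply, dotProduct]
  ring

lemma diagonal_mul_transpose_mul_self_mul_diagonal_mulVec_apply (u : n → ℝ) (i : n) :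
    ((diagonal y * (Xᵀ * X) * diagonal y) *ᵥ u) i =
      y i * ((fun j => X j i) ⬝ᵥ (X *ᵥ (diagonal y *ᵥ u))) := by
  simp only [← mulVec_mulVec, mulVec_diagonal]
  rfl

end Gram

end Matrix

lemma nonneg_of_forall_mul_add_mul_sq_nonneg {a b : ℝ}
    (h : ∀ t : ℝ, 0 < t → t ≤ 1 → 0 ≤ a * t + b * t ^ 2) : 0 ≤ a := by
  have hlim : Filter.Tendsto (fun t : ℝ => a + b * t) (nhdsWithin 0 (Set.Ioi 0)) (nhds a) := by
    have : Continuous (fun t : ℝ => a + b * t) := by fun_prop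
    simpa using (this.tendsto 0).mono_left nhdsWithin_le_nhds
  refine ge_of_tendsto hlim ?_
  filter_upwards [Ioc_mem_nhdsGT zero_lt_one] with t ht
  have := h t ht.1 ht.2
  nlinarith [ht.1]

section QuadObjective

variable {ι : Type*} [Fintype ι] {H : Matrix ι ι ℝ} {q : ι → ℝ}

noncomputable def quadObjective (H : Matrix ι ι ℝ) (q : ι → ℝ) (α : ι → ℝ) : ℝ :=
  1 / 2 * (α ⬝ᵥ (H *ᵥ α)) + q ⬝ᵥ α

lemma quadObjective_add (hH : H.IsSymm) (α v : ι → ℝ) :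
    quadObjective H q (α + v) =
      quadObjective H q α + (H *ᵥ α + q) ⬝ᵥ v + 1 / 2 * (v ⬝ᵥ (H *ᵥ v)) := by
  simp only [quadObjective, mulVec_add, dotProduct_add, add_dotProduct,
    hH.dotProduct_mulVec_comm v α, dotProduct_comm (H *ᵥ α) v]
  ring

lemma IsMinOn.quadObjective_gradient_dotProduct_sub_nonneg (hH : H.IsSymm) {s : Set (ι → ℝ)}
    (hs : Convex ℝ s) {a b : ι → ℝ} (hmin : IsMinOn (quadObjective H q) s a) (ha : a ∈ s)
    (hb : b ∈ s) : 0 ≤ (H *ᵥ a + q) ⬝ᵥ (b - a) := by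
  refine nonneg_of_forall_mul_add_mul_sq_nonneg
    (b := 1 / 2 * ((b - a) ⬝ᵥ (H *ᵥ (b - a)))) fun t ht0 ht1 => ?_
  have h := hmin (hs.add_smul_sub_mem ha hb ⟨ht0.le, ht1⟩)
  rw [Set.mem_ofPred_eq, quadObjective_add hH] at h
  simp only [dotProduct_smul, mulVec_smul, smul_dotProduct, smul_eq_mul] at h
  linarith

variable [DecidableEq ι]

lemma quadObjective_add_single (hH : H.IsSymm) (α : ι → ℝ) (k : ι) (s : ℝ) :
    quadObjective H q (α + Pi.single k s) =
      quadObjective H q α + (H *ᵥ α + q) k * s + 1 / 2 * (H k k * s ^ 2) := by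
  rw [quadObjective_add hH, dotProduct_single, single_dotProduct]
  simp only [mulVec_single, Pi.smul_apply, col_apply, MulOpposite.smul_eq_mul_unop,
    MulOpposite.unop_op]
  ring

lemma IsMinOn.quadObjective_gradient_apply_eq_zero (hH : H.IsSymm) {a : ι → ℝ}
    (hmin : IsMinOn (quadObjective H q) (Set.Ici 0) a) (ha : 0 ≤ a) {k : ι} (hk : 0 < a k) :
    (H *ᵥ a + q) k = 0 := by
  have hvi := fun b (hb : b ∈ Set.Ici 0) =>
    hmin.quadObjective_gradient_dotProduct_sub_nonneg hH (convex_Ici 0) ha hb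
  have hup : 0 ≤ (H *ᵥ a + q) k := by
    simpa using hvi (a + Pi.single k 1) (add_nonneg ha (Pi.single_nonneg.mpr zero_le_one))
  have hdown : 0 ≤ (H *ᵥ a + q) k * -a k := by
    simpa [Function.update_eq_add_single_sub] using
      hvi (Function.update a k 0) (le_update_iff.2 ⟨le_rfl, fun j _ => ha j⟩)
  nlinarith

theorem IsMinOn.abs_quadObjective_gradient_apply_le (hH : H.PosSemidef) {a b : ι → ℝ}
    (hmin : IsMinOn (quadObjective H q) (Set.Ici 0) a) (ha : 0 ≤ a) {k : ι} (hk : 0 < a k)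
    (hb : 0 ≤ b) (hba : quadObjective H q b ≤ quadObjective H q (Function.update a k 0)) :
    |(H *ᵥ b + q) k| ≤ a k * H k k := by
  have hsymm : H.IsSymm := isHermitian_iff_isSymm.mp hH.isHermitian
  have hgk := hmin.quadObjective_gradient_apply_eq_zero hsymm ha hk
  have hvi := hmin.quadObjective_gradient_dotProduct_sub_nonneg hsymm (convex_Ici 0) ha hb
  have hquad : (b - a) ⬝ᵥ (H *ᵥ (b - a)) ≤ H k k * a k ^ 2 := by
    rw [Function.update_eq_add_single_sub, zero_sub, quadObjective_add_single hsymm, hgk,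
      ← add_sub_cancel a b, quadObjective_add hsymm] at hba
    linarith
  have hcs := hH.dotProduct_mulVec_sq_le (Pi.single k 1) (b - a)
  have hrow : Pi.single k 1 ⬝ᵥ (H *ᵥ (b - a)) = (H *ᵥ b + q) k := by
    rw [single_dotProduct, mulVec_sub]
    simp only [one_mul, Pi.sub_apply, Pi.add_apply] at hgk ⊢
    linarith
  rw [hrow, single_dotProduct, mulVec_single_one, one_mul, col_apply] at hcs
  have hHkk : 0 ≤ H k k := hH.diag_nonneg
  refine abs_le_of_sq_le_sq ?_ (mul_nonneg hk.le hHkk)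
  calc (H *ᵥ b + q) k ^ 2 ≤ H k k * ((b - a) ⬝ᵥ (H *ᵥ (b - a))) := hcs
    _ ≤ H k k * (H k k * a k ^ 2) := mul_le_mul_of_nonneg_left hquad hHkk
    _ = (a k * H k k) ^ 2 := by ring

end QuadObjective

theorem stmt_17_general {d m : ℕ} (X : Matrix (Fin d) (Fin m) ℝ)
    (y : Fin m → ℝ) (hy : ∀ i, y i = 1 ∨ y i = -1)
    (Y : Matrix (Fin m) (Fin m) ℝ) (hY : Y = Matrix.diagonal y)
    (e : Fin m → ℝ) (he : e = fun _ => 1)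
    (C₁ C₂ D : ℝ) (hC₁ : 0 < C₁) (hC₂ : 0 < C₂)
    (Q : Matrix (Fin m) (Fin m) ℝ) (hQ : Q = Y * (Xᵀ * X) * Y)
    (H : Matrix (Fin m ⊕ Fin m) (Fin m ⊕ Fin m) ℝ)
    (hH : H = Matrix.fromBlocks (Q + ((m : ℝ) / (2 * C₁)) • 1) (-Q)
                (-Q) (Q + ((m : ℝ) / (2 * C₂)) • 1))
    (q : Fin m ⊕ Fin m → ℝ) (hq : q = Sum.elim ((D - 1) • e) ((D + 1) • e))
    (f : (Fin m ⊕ Fin m → ℝ) → ℝ)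
    (hf : ∀ α, f α = (1 / 2) * (α ⬝ᵥ (H *ᵥ α)) + q ⬝ᵥ α)
    (αstar : Fin m ⊕ Fin m → ℝ)
    (hstar : (∀ j, 0 ≤ αstar j) ∧
      ∀ α : Fin m ⊕ Fin m → ℝ, (∀ j, 0 ≤ α j) → f αstar ≤ f α)
    (αa : (Fin m ⊕ Fin m) → (Fin m ⊕ Fin m → ℝ))
    (hαa : ∀ k, ((∀ j, 0 ≤ αa k j) ∧ αa k k = 0) ∧
      ∀ α : Fin m ⊕ Fin m → ℝ, (∀ j, 0 ≤ α j) → α k = 0 → f (αa k) ≤ f α)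
    (wk : (Fin m ⊕ Fin m) → (Fin d → ℝ))
    (hwk : ∀ k, wk k =
      X *ᵥ (Y *ᵥ ((fun j => αa k (Sum.inl j)) - fun j => αa k (Sum.inr j)))) :
    (∀ i : Fin m, 0 < αstar (Sum.inl i) →
        y i * ((fun j => X j i) ⬝ᵥ wk (Sum.inl i)) < 0 →
        1 ≤ αstar (Sum.inl i) *
              (((fun j => X j i) ⬝ᵥ fun j => X j i) + (m : ℝ) / (2 * C₁)) + D) ∧
    (∀ i : Fin m, 0 < αstar (Sum.inr i) →
        y i * ((fun j => X j i) ⬝ᵥ wk (Sum.inr i)) < 0 →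
        1 ≤ αstar (Sum.inr i) *
              (((fun j => X j i) ⬝ᵥ fun j => X j i) + (m : ℝ) / (2 * C₂)) - D) := by
  obtain rfl : f = quadObjective H q := funext hf
  have hQpsd : Q.PosSemidef :=
    hQ ▸ hY ▸ posSemidef_diagonal_mul_transpose_mul_self_mul_diagonal X y
  have hHpsd : H.PosSemidef :=
    hH ▸ hQpsd.fromBlocks_add_smul_one_neg (by positivity) (by positivity)
  have hbound : ∀ k, 0 < αstar k → |(H *ᵥ αa k + q) k| ≤ αstar k * H k k := fun k hk =>
    IsMinOn.abs_quadObjective_gradient_apply_le hHpsd hstar.2 hstar.1 hk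
      (hαa k).1.1 ((hαa k).2 _ (le_update_iff.2 ⟨le_rfl, fun j _ => hstar.1 j⟩)
        (Function.update_self ..))
  have hQw : ∀ k i, (Q *ᵥ ((fun j => αa k (Sum.inl j)) - fun j => αa k (Sum.inr j))) i =
      y i * ((fun j => X j i) ⬝ᵥ wk k) := by
    intro k i
    rw [hwk, hQ, hY, diagonal_mul_transpose_mul_self_mul_diagonal_mulVec_apply]
  have hQii : ∀ i, Q i i = (fun j => X j i) ⬝ᵥ fun j => X j i := by
    intro i
    rw [hQ, hY, diagonal_mul_transpose_mul_self_mul_diagonal_apply_self]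
    rcases hy i with h | h <;> simp [h]
  constructor
  · intro i hpos hmis
    have h := (abs_le.mp (hbound _ hpos)).1
    rw [Pi.add_apply, hH, fromBlocks_add_smul_one_neg_mulVec_inl _ _ _ (hαa _).1.2, hQw] at h
    simp only [fromBlocks_apply₁₁, Matrix.add_apply, Matrix.smul_apply, one_apply_eq,
      smul_eq_mul, mul_one, hQii, hq, he, Sum.elim_inl, Pi.smul_apply] at h
    linarith
  · intro i hpos hmis
    have h := (abs_le.mp (hbound _ hpos)).2
    rw [Pi.add_apply, hH, fromBlocks_add_smul_one_neg_mulVec_inr _ _ _ (hαa _).1.2, hQw] at h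
    simp only [fromBlocks_apply₂₂, Matrix.add_apply, Matrix.smul_apply, one_apply_eq,
      smul_eq_mul, mul_one, hQii, hq, he, Sum.elim_inr, Pi.smul_apply] at h
    linarith

/-- The per-coordinate inequalities from the proof of Theorem 3 of the paper: for the dual
ODM problem `min f(α) = (1/2) αᵀHα + qᵀα` over `α ≥ 0`, with `α*` a minimizer, `αᵏ` a
minimizer with the extra constraint `αₖ = 0`, and `wᵏ = X Y (ζᵏ − βᵏ)` the recovered primal
weight vector, (a) if `α*ᵢ > 0` and example `i` is misclassified by `wⁱ` then
`1 ≤ α*ᵢ (‖xᵢ‖² + m/(2C₁)) + D`, and (b) if `α*_{m+i} > 0` and example `i` is misclassified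
by `w^{m+i}` then `1 ≤ α*_{m+i} (‖xᵢ‖² + m/(2C₂)) − D`. -/
theorem stmt_17 {d m : ℕ} (hm : 1 ≤ m) (X : Matrix (Fin d) (Fin m) ℝ)
    (y : Fin m → ℝ) (hy : ∀ i, y i = 1 ∨ y i = -1)
    (Y : Matrix (Fin m) (Fin m) ℝ) (hY : Y = Matrix.diagonal y)
    (e : Fin m → ℝ) (he : e = fun _ => 1)
    (C₁ C₂ D : ℝ) (hC₁ : 0 < C₁) (hC₂ : 0 < C₂)
    (Q : Matrix (Fin m) (Fin m) ℝ) (hQ : Q = Y * (Xᵀ * X) * Y)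
    (H : Matrix (Fin m ⊕ Fin m) (Fin m ⊕ Fin m) ℝ)
    (hH : H = Matrix.fromBlocks (Q + ((m : ℝ) / (2 * C₁)) • 1) (-Q)
                (-Q) (Q + ((m : ℝ) / (2 * C₂)) • 1))
    (q : Fin m ⊕ Fin m → ℝ) (hq : q = Sum.elim ((D - 1) • e) ((D + 1) • e))
    (f : (Fin m ⊕ Fin m → ℝ) → ℝ)
    (hf : ∀ α, f α = (1 / 2) * (α ⬝ᵥ (H *ᵥ α)) + q ⬝ᵥ α)
    (αstar : Fin m ⊕ Fin m → ℝ)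
    (hstar : (∀ j, 0 ≤ αstar j) ∧
      ∀ α : Fin m ⊕ Fin m → ℝ, (∀ j, 0 ≤ α j) → f αstar ≤ f α)
    (αa : (Fin m ⊕ Fin m) → (Fin m ⊕ Fin m → ℝ))
    (hαa : ∀ k, ((∀ j, 0 ≤ αa k j) ∧ αa k k = 0) ∧
      ∀ α : Fin m ⊕ Fin m → ℝ, (∀ j, 0 ≤ α j) → α k = 0 → f (αa k) ≤ f α)
    (wk : (Fin m ⊕ Fin m) → (Fin d → ℝ))
    (hwk : ∀ k, wk k =
      X *ᵥ (Y *ᵥ ((fun j => αa k (Sum.inl j)) - fun j => αa k (Sum.inr j)))) :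
    (∀ i : Fin m, 0 < αstar (Sum.inl i) →
        y i * ((fun j => X j i) ⬝ᵥ wk (Sum.inl i)) < 0 →
        1 ≤ αstar (Sum.inl i) *
              (((fun j => X j i) ⬝ᵥ fun j => X j i) + (m : ℝ) / (2 * C₁)) + D) ∧
    (∀ i : Fin m, 0 < αstar (Sum.inr i) →
        y i * ((fun j => X j i) ⬝ᵥ wk (Sum.inr i)) < 0 →
        1 ≤ αstar (Sum.inr i) *
              (((fun j => X j i) ⬝ᵥ fun j => X j i) + (m : ℝ) / (2 * C₂)) - D) :=
  stmt_17_general X y hy Y hY e he C₁ C₂ D hC₁ hC₂ Q hQ H hH q hq f hf αstar hstar αa hαa wk hwk
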